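/- arXiv:1203.0262 — 3 statements merged into one kernel-verified Lean document; each statement's English description precedes it below -/
import Mathlib

section
/- Let Φ : B(H_A) → B(H_B) be a quantum channel between finite-dimensional spaces with dual (adjoint) unital completely positive map Φ* : B(H_B) → B(H_A). If B is a positive operator in B(H_B) such that rank Φ*(B) = r, then rank B ≤ min{ dim ker Φ* + r², dim H_B }. -/
open Matrix
open scoped ComplexOrder
noncomputable section

abbrev Mat (n : ℕ) := Matrix (Fin n) (Fin n) ℂ

/-- Complete positivity of a linear map between matrix algebras:
all ampliations `id_k ⊗ Φ` map positive semidefinite matrices to positive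
semidefinite matrices. -/
def IsCP {m n : Type*} [Fintype m] [Fintype n]
    (Φ : Matrix m m ℂ →ₗ[ℂ] Matrix n n ℂ) : Prop :=
  ∀ (k : ℕ) (M : Matrix (Fin k × m) (Fin k × m) ℂ), M.PosSemidef →
    (Matrix.of fun p q : Fin k × n =>
      Φ (Matrix.of fun a b => M (p.1, a) (q.1, b)) p.2 q.2).PosSemidef

/-- Quantum channel: completely positive and trace preserving. -/
def IsChannel {m n : Type*} [Fintype m] [Fintype n]
    (Φ : Matrix m m ℂ →ₗ[ℂ] Matrix n n ℂ) : Prop :=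
  IsCP Φ ∧ ∀ ρ : Matrix m m ℂ, (Φ ρ).trace = ρ.trace

/-- A quantum state: positive semidefinite matrix of unit trace. -/
def IsState {n : Type*} [Fintype n] (ρ : Matrix n n ℂ) : Prop :=
  ρ.PosSemidef ∧ ρ.trace = 1

/-- Functional-calculus logarithm of a Hermitian matrix (with log 0 = 0 on the kernel). -/
def matLog {n : ℕ} (A : Mat n) : Mat n :=
  if h : A.IsHermitian then
    (h.eigenvectorUnitary : Mat n) *
      Matrix.diagonal (fun i => (Real.log (h.eigenvalues i) : ℂ)) *
      (star (h.eigenvectorUnitary : Mat n))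
  else 0

/-- Quantum relative entropy  H(ρ‖σ) = Tr ρ (log ρ − log σ). -/
def relEntropy {n : ℕ} (ρ σ : Mat n) : ℝ :=
  ((ρ * (matLog ρ - matLog σ)).trace).re

/-- von Neumann entropy. -/
def vnEntropy {n : Type*} [Fintype n] [DecidableEq n] (ρ : Matrix n n ℂ) : ℝ :=
  if h : ρ.IsHermitian then -∑ i, (h.eigenvalues i) * Real.log (h.eigenvalues i) else 0

/-- Partial trace over the second factor. -/
def ptrSnd {m k : Type*} [Fintype k] (M : Matrix (m × k) (m × k) ℂ) : Matrix m m ℂ :=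
  Matrix.of fun a a' => ∑ b, M (a, b) (a', b)

/-- Partial trace over the first factor. -/
def ptrFst {m k : Type*} [Fintype m] (M : Matrix (m × k) (m × k) ℂ) : Matrix k k ℂ :=
  Matrix.of fun b b' => ∑ a, M (a, b) (a, b')

/-!
Let `V` and `U` be isometries onto the ranges of `B` and of `Φ* B` (the eigenvectors with nonzero
eigenvalue), so that `V` has `rank B` and `U` has `r` columns. If `Φ* B * N = 0`, then
`tr (Φ (N Nᴴ) * B) = 0`, so the positive matrices `Φ (N Nᴴ)` and `B` multiply to zero; hence
`Φ* X * N = 0` for every positive `X` whose range lies in that of `B`. Since such `X = V Z Vᴴ`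
span the corner `V M_{rank B} Vᴴ`, the map `Φ*` sends it into the corner `U M_r Uᴴ`. Thus
`Z ↦ Uᴴ Φ*(V Z Vᴴ) U` is a linear map `M_{rank B} → M_r` whose kernel embeds into `ker Φ*`, and
rank–nullity gives `(rank B)² ≤ dim ker Φ* + r²`.
-/

namespace Matrix

section ConjLinearMap

variable {R : Type*} [CommSemiring R] [StarRing R] {m n : Type*} [Fintype n]

def conjLinearMap (V : Matrix m n R) : Matrix n n R →ₗ[R] Matrix m m R :=
  mulRightLinearMap m R Vᴴ ∘ₗ mulLeftLinearMap n R V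

@[simp]
theorem conjLinearMap_apply (V : Matrix m n R) (Z : Matrix n n R) :
    conjLinearMap V Z = V * Z * Vᴴ :=
  rfl

theorem conjLinearMap_injective [Fintype m] [DecidableEq n] {V : Matrix m n R}
    (hV : Vᴴ * V = 1) : Function.Injective (conjLinearMap V) :=
  Function.LeftInverse.injective (g := conjLinearMap Vᴴ) fun Z ↦ by
    rw [conjLinearMap_apply, conjLinearMap_apply, conjTranspose_conjTranspose,
      ← Matrix.mul_assoc, ← Matrix.mul_assoc, hV, Matrix.one_mul, Matrix.mul_assoc, hV,
      Matrix.mul_one]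

end ConjLinearMap

section Positivity

variable {n : Type*} [Fintype n] [DecidableEq n]

theorem posSemidef_of_forall_dotProduct_mulVec_nonneg {A : Matrix n n ℂ}
    (hA : ∀ x, 0 ≤ star x ⬝ᵥ (A *ᵥ x)) : A.PosSemidef := by
  rw [← isPositive_toEuclideanLin_iff, LinearMap.isPositive_iff_complex]
  intro x
  obtain ⟨hre, him⟩ := Complex.nonneg_iff.mp (hA x.ofLp)
  have hinner : inner ℂ (A.toEuclideanLin x) x = star (star x.ofLp ⬝ᵥ (A *ᵥ x.ofLp)) := by
    rw [← inner_conj_symm, EuclideanSpace.inner_eq_star_dotProduct, dotProduct_comm]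
    rfl
  rw [hinner]
  exact ⟨Complex.ext (by simp) (by simp [← him]), by simpa using hre⟩

open scoped MatrixOrder in
theorem PosSemidef.trace_mul_nonneg {A B : Matrix n n ℂ} (hA : A.PosSemidef)
    (hB : B.PosSemidef) : 0 ≤ (A * B).trace := by
  obtain ⟨C, rfl⟩ := CStarAlgebra.nonneg_iff_eq_star_mul_self.mp hA.nonneg
  rw [star_eq_conjTranspose, Matrix.mul_assoc, trace_mul_comm, Matrix.mul_assoc]
  simpa only [Matrix.mul_assoc] using (hB.mul_mul_conjTranspose_same C).trace_nonneg

open scoped MatrixOrder in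
theorem PosSemidef.mul_eq_zero_of_trace_mul_eq_zero {A B : Matrix n n ℂ} (hA : A.PosSemidef)
    (hB : B.PosSemidef) (h : (A * B).trace = 0) : A * B = 0 := by
  obtain ⟨C, rfl⟩ := CStarAlgebra.nonneg_iff_eq_star_mul_self.mp hA.nonneg
  obtain ⟨E, rfl⟩ := CStarAlgebra.nonneg_iff_eq_star_mul_self.mp hB.nonneg
  simp only [star_eq_conjTranspose] at h ⊢
  have hCE : C * Eᴴ = 0 := by
    rw [← trace_conjTranspose_mul_self_eq_zero_iff, conjTranspose_mul, conjTranspose_conjTranspose]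
    rw [← Matrix.mul_assoc, trace_mul_cycle] at h
    simpa only [Matrix.mul_assoc] using h
  rw [Matrix.mul_assoc, ← Matrix.mul_assoc C, hCE, Matrix.zero_mul, Matrix.mul_zero]

end Positivity

namespace IsHermitian

variable {𝕜 : Type*} [RCLike 𝕜] {n : Type*} [Fintype n] [DecidableEq n] {A : Matrix n n 𝕜}
  (hA : A.IsHermitian)

noncomputable def nonzeroEigenvectors : Matrix n {i // hA.eigenvalues i ≠ 0} 𝕜 :=
  (hA.eigenvectorUnitary : Matrix n n 𝕜).submatrix id Subtype.val

theorem conjTranspose_nonzeroEigenvectors_mul_self :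
    hA.nonzeroEigenvectorsᴴ * hA.nonzeroEigenvectors = 1 := by
  rw [nonzeroEigenvectors, conjTranspose_submatrix, ← submatrix_mul _ _ _ _ _ Function.bijective_id,
    ← star_eq_conjTranspose, Unitary.coe_star_mul_self]
  exact submatrix_one_embedding (Function.Embedding.subtype _)

theorem nonzeroEigenvectors_mul_diagonal_mul_conjTranspose :
    hA.nonzeroEigenvectors *
      diagonal (fun i : {i // hA.eigenvalues i ≠ 0} ↦ (hA.eigenvalues i : 𝕜)) *
      hA.nonzeroEigenvectorsᴴ = A := by
  conv_rhs => rw [hA.spectral_theorem, Unitary.conjStarAlgAut_apply]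
  ext i j
  rw [mul_apply, mul_apply]
  simp only [nonzeroEigenvectors, mul_diagonal, submatrix_apply, id, conjTranspose_apply,
    star_apply, Function.comp_apply]
  rw [← Finset.sum_filter_of_ne (p := fun k ↦ hA.eigenvalues k ≠ 0) fun k _ hk hzero ↦ by
    simp [hzero] at hk]
  rw [← Finset.sum_subtype_eq_sum_filter, Finset.subtype_univ]

theorem mul_nonzeroEigenvectors :
    A * hA.nonzeroEigenvectors = hA.nonzeroEigenvectors *
      diagonal (fun i : {i // hA.eigenvalues i ≠ 0} ↦ (hA.eigenvalues i : 𝕜)) := by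
  conv_lhs => arg 1; rw [← hA.nonzeroEigenvectors_mul_diagonal_mul_conjTranspose]
  rw [Matrix.mul_assoc, hA.conjTranspose_nonzeroEigenvectors_mul_self, Matrix.mul_one]

theorem mul_nonzeroEigenvectors_mul_conjTranspose :
    A * hA.nonzeroEigenvectors * hA.nonzeroEigenvectorsᴴ = A := by
  rw [mul_nonzeroEigenvectors, nonzeroEigenvectors_mul_diagonal_mul_conjTranspose]

theorem nonzeroEigenvectors_eq_mul :
    hA.nonzeroEigenvectors = A * (hA.nonzeroEigenvectors *
      diagonal (fun i : {i // hA.eigenvalues i ≠ 0} ↦ (hA.eigenvalues i : 𝕜)⁻¹)) := by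
  rw [← Matrix.mul_assoc, mul_nonzeroEigenvectors, Matrix.mul_assoc, diagonal_mul_diagonal]
  conv_lhs => rw [← Matrix.mul_one hA.nonzeroEigenvectors]
  congr 1
  rw [← diagonal_one]
  congr 1
  ext i
  exact (mul_inv_cancel₀ (by exact_mod_cast i.2)).symm

end IsHermitian

end Matrix

theorem IsCP.posSemidef_apply {m n : Type*} [Fintype m] [Fintype n]
    {Φ : Matrix m m ℂ →ₗ[ℂ] Matrix n n ℂ} (hΦ : IsCP Φ) {A : Matrix m m ℂ}
    (hA : A.PosSemidef) : (Φ A).PosSemidef :=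
  (hΦ 1 (A.submatrix Prod.snd Prod.snd) (hA.submatrix _)).submatrix fun b ↦ ((0 : Fin 1), b)

theorem Module.finrank_le_finrank_ker_add_of_comp_eq {K M N P Q : Type*} [DivisionRing K]
    [AddCommGroup M] [Module K M] [AddCommGroup N] [Module K N] [AddCommGroup P] [Module K P]
    [AddCommGroup Q] [Module K Q] [FiniteDimensional K M] [FiniteDimensional K N]
    [FiniteDimensional K Q] {S : M →ₗ[K] N} (hS : Function.Injective S) (G : N →ₗ[K] P)
    (F : M →ₗ[K] Q) (L : Q →ₗ[K] P) (h : G ∘ₗ S = L ∘ₗ F) :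
    finrank K M ≤ finrank K (LinearMap.ker G) + finrank K Q := by
  have hker : (LinearMap.ker F).map S ≤ LinearMap.ker G := by
    rintro _ ⟨x, hx, rfl⟩
    rw [LinearMap.mem_ker, ← LinearMap.comp_apply, h, LinearMap.comp_apply,
      LinearMap.mem_ker.mp hx, map_zero]
  have hkerF : finrank K (LinearMap.ker F) ≤ finrank K (LinearMap.ker G) := by
    rw [(Submodule.equivMapOfInjective S hS _).finrank_eq]
    exact Submodule.finrank_mono hker
  rw [← LinearMap.finrank_range_add_finrank_ker F, add_comm]
  exact add_le_add hkerF (Submodule.finrank_le _)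

section DualOfPositiveMap

variable {m n : Type*} [Fintype m] [Fintype n]
  {Φ : Matrix m m ℂ →ₗ[ℂ] Matrix n n ℂ} {Ψ : Matrix n n ℂ →ₗ[ℂ] Matrix m m ℂ}

theorem star_dotProduct_dual_apply_mulVec
    (hdual : ∀ A B, (Φ A * B).trace = (A * Ψ B).trace) (B : Matrix n n ℂ) (x : m → ℂ) :
    star x ⬝ᵥ (Ψ B *ᵥ x) = (Φ (vecMulVec x (star x)) * B).trace := by
  rw [hdual, trace_mul_comm, mul_vecMulVec, trace_vecMulVec, dotProduct_comm]

theorem posSemidef_dual_apply [DecidableEq m] [DecidableEq n]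
    (hΦ : ∀ A, A.PosSemidef → (Φ A).PosSemidef)
    (hdual : ∀ A B, (Φ A * B).trace = (A * Ψ B).trace) {B : Matrix n n ℂ}
    (hB : B.PosSemidef) : (Ψ B).PosSemidef :=
  posSemidef_of_forall_dotProduct_mulVec_nonneg fun x ↦ by
    rw [star_dotProduct_dual_apply_mulVec hdual]
    exact (hΦ _ (posSemidef_vecMulVec_self_star x)).trace_mul_nonneg hB

theorem dual_apply_mul_eq_zero [DecidableEq m] [DecidableEq n]
    (hΦ : ∀ A, A.PosSemidef → (Φ A).PosSemidef)
    (hdual : ∀ A B, (Φ A * B).trace = (A * Ψ B).trace) {B X R : Matrix n n ℂ}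
    (hB : B.PosSemidef) (hX : X.PosSemidef) (hXB : X = B * R) {k : Type*} [Fintype k]
    {N : Matrix m k ℂ} (hN : Ψ B * N = 0) : Ψ X * N = 0 := by
  have hNN : (N * Nᴴ).PosSemidef := posSemidef_self_mul_conjTranspose N
  have hMB : Φ (N * Nᴴ) * B = 0 := by
    refine (hΦ _ hNN).mul_eq_zero_of_trace_mul_eq_zero hB ?_
    rw [hdual, Matrix.mul_assoc, trace_mul_comm, Matrix.mul_assoc, hN, Matrix.mul_zero,
      trace_zero]
  have hXNN : Ψ X * (N * Nᴴ) = 0 := by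
    refine (posSemidef_dual_apply hΦ hdual hX).mul_eq_zero_of_trace_mul_eq_zero hNN ?_
    rw [trace_mul_comm, ← hdual, hXB, ← Matrix.mul_assoc, hMB, Matrix.zero_mul, trace_zero]
  simpa using (mul_conjTranspose_mul_self_eq_zero Nᴴ (Ψ X)).mp (by simpa using hXNN)

open scoped MatrixOrder in
theorem dual_comp_conjLinearMap_eq [DecidableEq m] [DecidableEq n]
    (hΦ : ∀ A, A.PosSemidef → (Φ A).PosSemidef)
    (hdual : ∀ A B, (Φ A * B).trace = (A * Ψ B).trace) {B : Matrix n n ℂ} (hB : B.PosSemidef)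
    {ι κ : Type*} [Fintype ι] [DecidableEq ι] [Fintype κ] {V : Matrix n ι ℂ}
    {R : Matrix n ι ℂ} (hV : V = B * R) {U : Matrix m κ ℂ} (hU : Ψ B * U * Uᴴ = Ψ B) :
    Ψ ∘ₗ conjLinearMap V = conjLinearMap U ∘ₗ conjLinearMap Uᴴ ∘ₗ Ψ ∘ₗ conjLinearMap V := by
  refine LinearMap.ext_on CStarAlgebra.span_nonneg fun Z hZ ↦ ?_
  set Y := Ψ (V * Z * Vᴴ)
  have hX : (V * Z * Vᴴ).PosSemidef :=
    (nonneg_iff_posSemidef.mp hZ).mul_mul_conjTranspose_same V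
  have hY : Y.PosSemidef := posSemidef_dual_apply hΦ hdual hX
  have hYP : Y * (U * Uᴴ) = Y := by
    have := dual_apply_mul_eq_zero hΦ hdual hB hX (R := R * Z * Vᴴ)
      (by rw [hV]; simp only [Matrix.mul_assoc]) (N := 1 - U * Uᴴ)
      (by rw [Matrix.mul_sub, Matrix.mul_one, ← Matrix.mul_assoc, hU, sub_self])
    rwa [Matrix.mul_sub, Matrix.mul_one, sub_eq_zero, eq_comm] at this
  have hPY : U * Uᴴ * Y = Y := by
    simpa [Matrix.mul_assoc, hY.isHermitian.eq] using congrArg conjTranspose hYP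
  change Y = U * (Uᴴ * Y * Uᴴᴴ) * Uᴴ
  calc Y = U * Uᴴ * Y * (U * Uᴴ) := by rw [hPY, hYP]
    _ = U * (Uᴴ * Y * Uᴴᴴ) * Uᴴ := by simp only [conjTranspose_conjTranspose, Matrix.mul_assoc]

theorem rank_sq_le_finrank_ker_dual_add_rank_dual_apply_sq [DecidableEq m] [DecidableEq n]
    (hΦ : ∀ A, A.PosSemidef → (Φ A).PosSemidef)
    (hdual : ∀ A B, (Φ A * B).trace = (A * Ψ B).trace) {B : Matrix n n ℂ}
    (hB : B.PosSemidef) :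
    B.rank ^ 2 ≤ Module.finrank ℂ (LinearMap.ker Ψ) + (Ψ B).rank ^ 2 := by
  have hD := posSemidef_dual_apply hΦ hdual hB
  have hcomp := dual_comp_conjLinearMap_eq hΦ hdual hB hB.1.nonzeroEigenvectors_eq_mul
    hD.1.mul_nonzeroEigenvectors_mul_conjTranspose
  have hcount := Module.finrank_le_finrank_ker_add_of_comp_eq
    (conjLinearMap_injective hB.1.conjTranspose_nonzeroEigenvectors_mul_self) Ψ _ _ hcomp
  simpa [Module.finrank_matrix, sq, ← hB.1.rank_eq_card_non_zero_eigs,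
    ← hD.1.rank_eq_card_non_zero_eigs] using hcount

end DualOfPositiveMap

/-- If `B ≥ 0` and `rank Φ*(B) = r`, then
`rank B ≤ min (dim ker Φ* + r²) (dim H_B)`. -/
theorem rank_le_of_rank_dual_apply
    {nA nB : ℕ}
    (Φ : Mat nA →ₗ[ℂ] Mat nB) (hΦ : IsChannel Φ)
    (Φd : Mat nB →ₗ[ℂ] Mat nA)
    (hdual : ∀ (A : Mat nA) (B : Mat nB), (Φ A * B).trace = (A * Φd B).trace)
    (B : Mat nB) (hB : B.PosSemidef)
    (r : ℕ) (hr : (Φd B).rank = r) :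
    B.rank ≤ min (Module.finrank ℂ (LinearMap.ker Φd) + r ^ 2) nB := by
  refine le_min ?_ (by simpa using B.rank_le_card_width)
  calc B.rank ≤ B.rank ^ 2 := Nat.le_self_pow two_ne_zero _
    _ ≤ Module.finrank ℂ (LinearMap.ker Φd) + r ^ 2 := hr ▸
      rank_sq_le_finrank_ker_dual_add_rank_dual_apply_sq (fun _ ↦ hΦ.1.posSemidef_apply) hdual hB
end
end

section
/- Let Φ : B(H) → B(H) be a quantum channel on a finite-dimensional Hilbert space H and let {φ_i}_{i∈I} be a family of unit vectors in H whose associated family of pure states is orthogonally non-decomposable (there is no proper nonzero subspace H_0 of H such that every φ_i lies either in H_0 or in its orthogonal complement). If Φ(|φ_i⟩⟨φ_i|) = |φ_i⟩⟨φ_i| for all i, then Φ restricted to operators supported on the subspace H_0 generated by {φ_i} is the identity map: Φ(ρ) = ρ for all ρ with support in H_0. -/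
/-!
Write `Φ` in Kraus form `Φ ρ = ∑ⱼ Kⱼ ρ Kⱼᴴ`, read off from the positive semidefinite Choi matrix;
trace preservation gives `∑ⱼ Kⱼᴴ Kⱼ = 1`. A fixed pure state `|φ⟩⟨φ|` forces every `Kⱼ φ` to be a
multiple `λⱼ φ`, and then `⟨φ, ψ⟩ = ⟨λ, μ⟩ ⟨φ, ψ⟩` for two such vectors with unit eigenvalue
tuples `λ, μ`. So non-orthogonal members of the family share their eigenvalue tuple, the joint
eigenspace of the `Kⱼ` through one member splits the family into that space and vectors
orthogonal to it, and non-decomposability makes it the whole space. Hence every `Kⱼ` is a scalar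
and `Φ ρ = (∑ⱼ Kⱼᴴ Kⱼ) ρ = ρ`.
-/

open Matrix
open scoped ComplexOrder
noncomputable section

/-- A family of vectors is orthogonally non-decomposable (subspace form): there is
no proper nonzero subspace `H₀` such that every vector of the family lies in `H₀`
or in its orthogonal complement. -/
def OrthNonDecomposable {n : ℕ} {I : Type*} (φ : I → (Fin n → ℂ)) : Prop :=
  ¬ ∃ H₀ : Submodule ℂ (Fin n → ℂ), H₀ ≠ ⊥ ∧ H₀ ≠ ⊤ ∧
      ∀ i, φ i ∈ H₀ ∨ (∀ y ∈ H₀, star y ⬝ᵥ φ i = 0)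

def choiMatrix {m : ℕ} {n : Type*} (Φ : Mat m →ₗ[ℂ] Matrix n n ℂ) :
    Matrix (Fin m × n) (Fin m × n) ℂ :=
  Matrix.of fun p q => Φ (single p.1 q.1 1) p.2 q.2

section Kraus

variable {m : ℕ} {n : Type*} {Φ : Mat m →ₗ[ℂ] Matrix n n ℂ}

theorem apply_eq_sum_choiMatrix (ρ : Mat m) (p q : n) :
    Φ ρ p q = ∑ a, ∑ b, ρ a b * choiMatrix Φ (a, p) (b, q) := by
  have hsingle : ∀ a b, single a b (ρ a b) = ρ a b • single a b 1 := by simp [smul_single]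
  conv_lhs => rw [matrix_eq_sum_single ρ]
  simp only [map_sum, hsingle, map_smul, Matrix.sum_apply, Matrix.smul_apply, smul_eq_mul,
    choiMatrix, of_apply]

theorem IsCP.posSemidef_choiMatrix [Fintype n] (hΦ : IsCP Φ) : (choiMatrix Φ).PosSemidef := by
  -- `ω` is the (unnormalised) maximally entangled vector `∑ₐ |a⟩ ⊗ |a⟩`
  let ω : Fin m × Fin m → ℂ := fun p => if p.1 = p.2 then 1 else 0
  convert hΦ m _ (posSemidef_vecMulVec_self_star ω) using 1
  ext p q
  simp only [choiMatrix, of_apply]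
  suffices h : single p.1 q.1 (1 : ℂ) = of fun a b => vecMulVec ω (star ω) (p.1, a) (q.1, b) by
    rw [h]
  ext a b
  by_cases hpa : p.1 = a <;> by_cases hqb : q.1 = b <;> simp [ω, vecMulVec_apply, hpa, hqb]

theorem IsCP.exists_kraus [Fintype n] (hΦ : IsCP Φ) :
    ∃ (r : ℕ) (K : Fin r → Matrix n (Fin m) ℂ), ∀ ρ, Φ ρ = ∑ j, K j * ρ * (K j)ᴴ := by
  obtain ⟨r, v, hv⟩ := posSemidef_iff_eq_sum_vecMulVec.mp hΦ.posSemidef_choiMatrix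
  refine ⟨r, fun j => Matrix.of fun p a => v j (a, p), fun ρ => ?_⟩
  ext p q
  simp only [apply_eq_sum_choiMatrix, hv, Matrix.sum_apply, vecMulVec_apply, mul_apply,
    conjTranspose_apply, of_apply, Pi.star_apply, Finset.mul_sum, Finset.sum_mul]
  conv_lhs => enter [2, a]; rw [Finset.sum_comm]
  conv_rhs => enter [2, j]; rw [Finset.sum_comm]
  rw [Finset.sum_comm]
  exact Fintype.sum_congr _ _ fun j => Fintype.sum_congr _ _ fun a => Fintype.sum_congr _ _
    fun b => by ring

theorem sum_conjTranspose_mul_self_eq_one_of_kraus {m n J : Type*} [Fintype m] [Fintype n]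
    [Fintype J] [DecidableEq m] {Φ : Matrix m m ℂ → Matrix n n ℂ} {K : J → Matrix n m ℂ}
    (hK : ∀ ρ, Φ ρ = ∑ j, K j * ρ * (K j)ᴴ) (hTP : ∀ ρ, (Φ ρ).trace = ρ.trace) :
    ∑ j, (K j)ᴴ * K j = 1 := by
  refine ext_iff_trace_mul_left.mpr fun x => ?_
  rw [mul_one]
  calc (x * ∑ j, (K j)ᴴ * K j).trace = (∑ j, K j * x * (K j)ᴴ).trace := by
        simp only [Finset.mul_sum, trace_sum]
        exact Finset.sum_congr rfl fun j _ => by rw [trace_mul_comm x, trace_mul_cycle (K j) x]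
    _ = x.trace := by rw [← hK, hTP]

end Kraus

theorem mul_vecMulVec_star_mul_conjTranspose {m n : Type*} [Fintype m] (A : Matrix n m ℂ)
    (v : m → ℂ) : A * vecMulVec v (star v) * Aᴴ = vecMulVec (A *ᵥ v) (star (A *ᵥ v)) := by
  rw [mul_vecMulVec, vecMulVec_mul, star_mulVec]

section PureStates

variable {n J : Type*} [Fintype n] [Fintype J]

theorem star_dotProduct_vecMulVec_star_mulVec (w x : n → ℂ) :
    star x ⬝ᵥ (vecMulVec w (star w) *ᵥ x) = star (star w ⬝ᵥ x) * (star w ⬝ᵥ x) := by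
  rw [vecMulVec_mulVec, op_smul_eq_smul, dotProduct_smul, smul_eq_mul, mul_comm,
    star_dotProduct x w]

theorem star_dotProduct_eq_zero_of_sum_vecMulVec_eq {w : J → n → ℂ} {v x : n → ℂ}
    (h : ∑ j, vecMulVec (w j) (star (w j)) = vecMulVec v (star v)) (hx : star v ⬝ᵥ x = 0)
    (j : J) : star (w j) ⬝ᵥ x = 0 := by
  have hsum : ∑ j, star (star (w j) ⬝ᵥ x) * (star (w j) ⬝ᵥ x) = 0 := by
    simp_rw [← star_dotProduct_vecMulVec_star_mulVec, ← dotProduct_sum, ← sum_mulVec, h,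
      star_dotProduct_vecMulVec_star_mulVec, hx, mul_zero]
  have hj := (Finset.sum_eq_zero_iff_of_nonneg fun j _ => star_mul_self_nonneg _).mp hsum j
    (Finset.mem_univ j)
  simpa using hj

theorem eq_smul_of_sum_vecMulVec_eq {w : J → n → ℂ} {v : n → ℂ} (hv : star v ⬝ᵥ v = 1)
    (h : ∑ j, vecMulVec (w j) (star (w j)) = vecMulVec v (star v)) (j : J) :
    w j = (star v ⬝ᵥ w j) • v := by
  set c := star v ⬝ᵥ w j
  have hx : star v ⬝ᵥ (w j - c • v) = 0 := by
    rw [dotProduct_sub, dotProduct_smul, hv, smul_eq_mul, mul_one, sub_self]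
  have hwx := star_dotProduct_eq_zero_of_sum_vecMulVec_eq h hx j
  have : star (w j - c • v) ⬝ᵥ (w j - c • v) = 0 := by
    rw [star_sub, sub_dotProduct, hwx, star_smul, smul_dotProduct, hx, smul_zero, sub_zero]
  exact sub_eq_zero.mp (dotProduct_star_self_eq_zero.mp this)

end PureStates

theorem eq_of_star_dotProduct_eq_one {J : Type*} [Fintype J] {a b : J → ℂ}
    (ha : star a ⬝ᵥ a = 1) (hb : star b ⬝ᵥ b = 1) (hab : star a ⬝ᵥ b = 1) : a = b := by
  have hba : star b ⬝ᵥ a = 1 := by rw [star_dotProduct, hab, star_one]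
  have : star (a - b) ⬝ᵥ (a - b) = 0 := by
    rw [star_sub, sub_dotProduct, dotProduct_sub, dotProduct_sub, ha, hb, hab, hba]
    ring
  exact sub_eq_zero.mp (dotProduct_star_self_eq_zero.mp this)

section KrausEigenvectors

variable {n J : Type*} [Fintype n] [DecidableEq n] [Fintype J] {K : J → Matrix n n ℂ}

theorem star_dotProduct_eq_mul_of_kraus_eigenvectors (hK1 : ∑ j, (K j)ᴴ * K j = 1)
    {x y : n → ℂ} {a b : J → ℂ} (hx : ∀ j, K j *ᵥ x = a j • x) (hy : ∀ j, K j *ᵥ y = b j • y) :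
    star x ⬝ᵥ y = (star a ⬝ᵥ b) * (star x ⬝ᵥ y) := by
  calc star x ⬝ᵥ y = star x ⬝ᵥ ((∑ j, (K j)ᴴ * K j) *ᵥ y) := by rw [hK1, one_mulVec]
    _ = ∑ j, star (K j *ᵥ x) ⬝ᵥ (K j *ᵥ y) := by
      simp only [sum_mulVec, dotProduct_sum, star_mulVec, ← mulVec_mulVec, dotProduct_mulVec]
    _ = (star a ⬝ᵥ b) * (star x ⬝ᵥ y) := by
      simp only [hx, hy, star_smul, smul_dotProduct, dotProduct_smul, smul_eq_mul]
      rw [dotProduct.eq_def (star a), Finset.sum_mul]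
      exact Fintype.sum_congr _ _ fun j => by rw [Pi.star_apply]; ring

theorem star_dotProduct_eq_zero_of_kraus_eigenvectors (hK1 : ∑ j, (K j)ᴴ * K j = 1)
    {x y : n → ℂ} {a b : J → ℂ} (hx : ∀ j, K j *ᵥ x = a j • x) (hy : ∀ j, K j *ᵥ y = b j • y)
    (ha : star a ⬝ᵥ a = 1) (hb : star b ⬝ᵥ b = 1) (hab : a ≠ b) : star x ⬝ᵥ y = 0 := by
  by_contra hxy
  have := star_dotProduct_eq_mul_of_kraus_eigenvectors hK1 hx hy
  exact hab (eq_of_star_dotProduct_eq_one ha hb (mul_eq_right₀ hxy |>.mp this.symm))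

end KrausEigenvectors

theorem mul_mul_conjTranspose_eq_of_eq_smul_one {n : Type*} [Fintype n] [DecidableEq n]
    {A : Matrix n n ℂ} {c : ℂ} (hA : A = c • 1) (ρ : Matrix n n ℂ) :
    A * ρ * Aᴴ = Aᴴ * A * ρ := by
  subst hA
  simp only [conjTranspose_smul, conjTranspose_one, Matrix.smul_mul, Matrix.mul_smul,
    Matrix.one_mul, Matrix.mul_one, smul_smul, mul_comm]

theorem OrthNonDecomposable.kraus_eq_smul_one {n : ℕ} {I J : Type*} [Fintype J]
    {K : J → Mat n} (hK1 : ∑ j, (K j)ᴴ * K j = 1) {φ : I → (Fin n → ℂ)}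
    (hφ : OrthNonDecomposable φ) (hunit : ∀ i, star (φ i) ⬝ᵥ φ i = 1) {a : I → J → ℂ}
    (heig : ∀ i j, K j *ᵥ φ i = a i j • φ i) (i₀ : I) (j : J) : K j = a i₀ j • 1 := by
  have ha : ∀ i, star (a i) ⬝ᵥ a i = 1 := fun i => by
    simpa [hunit i] using (star_dotProduct_eq_mul_of_kraus_eigenvectors hK1 (heig i) (heig i)).symm
  -- the joint eigenspace of the Kraus operators through `φ i₀` splits the family
  let H₀ := ⨅ j, Module.End.eigenspace (K j).mulVecLin (a i₀ j)
  have hmem : ∀ x, x ∈ H₀ ↔ ∀ j, K j *ᵥ x = a i₀ j • x := by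
    simp [H₀, Submodule.mem_iInf]
  have htop : H₀ = ⊤ := by
    by_contra hne
    refine hφ ⟨H₀, (Submodule.ne_bot_iff _).mpr ⟨φ i₀, (hmem _).mpr (heig i₀), ?_⟩, hne,
      fun i => ?_⟩
    · rintro h
      simpa [h] using hunit i₀
    by_cases hi : a i = a i₀
    · exact Or.inl ((hmem _).mpr (hi ▸ heig i))
    · exact Or.inr fun y hy => star_dotProduct_eq_zero_of_kraus_eigenvectors hK1 ((hmem y).mp hy)
        (heig i) (ha i₀) (ha i) (Ne.symm hi)
  refine ext_of_mulVec_single fun k => ?_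
  rw [(hmem _).mp (htop ▸ Submodule.mem_top) j, smul_mulVec, one_mulVec]

/-- If a channel fixes an orthogonally non-decomposable family of pure
states, it is the identity on operators supported on the span of the family. -/
theorem channel_fixing_OND_family_is_identity_on_span
    {n : ℕ} {I : Type*}
    (Φ : Mat n →ₗ[ℂ] Mat n) (hΦ : IsChannel Φ)
    (φ : I → (Fin n → ℂ)) (hunit : ∀ i, star (φ i) ⬝ᵥ φ i = 1)
    (hOND : OrthNonDecomposable φ)
    (hfix : ∀ i, Φ (Matrix.vecMulVec (φ i) (star (φ i)))
              = Matrix.vecMulVec (φ i) (star (φ i))) :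
    ∀ ρ : Mat n,
      LinearMap.range ρ.mulVecLin ≤ Submodule.span ℂ (Set.range φ) →
      LinearMap.range (ρᴴ).mulVecLin ≤ Submodule.span ℂ (Set.range φ) →
      Φ ρ = ρ := by
  intro ρ hρ _
  rcases isEmpty_or_nonempty I with _ | ⟨⟨i₀⟩⟩
  · rw [Set.range_eq_empty, Submodule.span_empty, le_bot_iff, LinearMap.range_eq_bot] at hρ
    have hρ0 : ρ = 0 := ext_of_mulVec_single fun k => by
      rw [zero_mulVec]; exact LinearMap.congr_fun hρ _
    rw [hρ0, map_zero]
  obtain ⟨r, K, hK⟩ := hΦ.1.exists_kraus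
  have hK1 := sum_conjTranspose_mul_self_eq_one_of_kraus hK hΦ.2
  have heig : ∀ i j, K j *ᵥ φ i = (star (φ i) ⬝ᵥ K j *ᵥ φ i) • φ i := fun i =>
    eq_smul_of_sum_vecMulVec_eq (hunit i)
      (by simpa only [hK, mul_vecMulVec_star_mul_conjTranspose] using hfix i)
  have hscalar := hOND.kraus_eq_smul_one hK1 hunit heig i₀
  calc Φ ρ = ∑ j, K j * ρ * (K j)ᴴ := hK ρ
    _ = (∑ j, (K j)ᴴ * K j) * ρ := by
      rw [Finset.sum_mul]
      exact Fintype.sum_congr _ _ fun j => mul_mul_conjTranspose_eq_of_eq_smul_one (hscalar j) ρ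
    _ = ρ := by rw [hK1, one_mul]
end
end

section
/- Let V : H → H ⊗ K be an isometry between finite-dimensional Hilbert spaces and {φ_i}_{i∈I} a finite family of unit vectors in H with V φ_i = φ_i ⊗ ψ_i for unit vectors ψ_i in K. If the family {|φ_i⟩⟨φ_i|} is orthogonally non-decomposable, then all ψ_i are equal: ψ_i = ψ_j for all i, j. -/
open Matrix
open scoped ComplexOrder
noncomputable section

/-- Dot product of elementary tensors factorizes. -/
lemma tensor_dotProduct {n m : ℕ} (a c : Fin n → ℂ) (b d : Fin m → ℂ) :
    star (fun p : Fin n × Fin m => a p.1 * b p.2) ⬝ᵥ (fun p => c p.1 * d p.2)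
      = (star a ⬝ᵥ c) * (star b ⬝ᵥ d) := by
  simp only [dotProduct, Fintype.sum_prod_type, Finset.sum_mul, Finset.mul_sum,
    Pi.star_apply, star_mul']
  rw [Finset.sum_comm]
  exact Finset.sum_congr rfl fun x _ => Finset.sum_congr rfl fun y _ => by ring

/-- If an isometry `V : H → H ⊗ K` maps each `φ_i` to `φ_i ⊗ ψ_i`
and the family `{φ_i}` is orthogonally non-decomposable, then all `ψ_i` coincide. -/
theorem psi_constant_of_OND_family
    {n m : ℕ} {I : Type*} [Fintype I]
    (V : (Fin n → ℂ) →ₗ[ℂ] (Fin n × Fin m → ℂ))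
    (hIso : ∀ x y : Fin n → ℂ, star (V x) ⬝ᵥ V y = star x ⬝ᵥ y)
    (φ : I → (Fin n → ℂ)) (ψ : I → (Fin m → ℂ))
    (hφunit : ∀ i, star (φ i) ⬝ᵥ φ i = 1)
    (hψunit : ∀ i, star (ψ i) ⬝ᵥ ψ i = 1)
    (hV : ∀ i, V (φ i) = fun p => φ i p.1 * ψ i p.2)
    (hOND : OrthNonDecomposable φ) :
    ∀ i j, ψ i = ψ j := by
  -- Key identity: ⟨φi,φj⟩ ⟨ψi,ψj⟩ = ⟨φi,φj⟩
  have prod : ∀ i j, (star (φ i) ⬝ᵥ φ j) * (star (ψ i) ⬝ᵥ ψ j) = star (φ i) ⬝ᵥ φ j := by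
    intro i j
    have h := hIso (φ i) (φ j)
    rw [hV i, hV j] at h
    rw [tensor_dotProduct] at h
    exact h
  -- If ⟨φi,φj⟩ ≠ 0 then ψ i = ψ j
  have key : ∀ i j, star (φ i) ⬝ᵥ φ j ≠ 0 → ψ i = ψ j := by
    intro i j hne
    have hb : star (ψ i) ⬝ᵥ ψ j = 1 := by
      have h := prod i j
      have : (star (φ i) ⬝ᵥ φ j) * (star (ψ i) ⬝ᵥ ψ j) = (star (φ i) ⬝ᵥ φ j) * 1 := by
        rw [mul_one]; exact h
      exact mul_left_cancel₀ hne this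
    have hb' : star (ψ j) ⬝ᵥ ψ i = 1 := by
      have h := congrArg star hb
      simp only [dotProduct, star_sum, star_mul', star_star, Pi.star_apply, star_one] at h
      rw [← h, dotProduct]
      exact Finset.sum_congr rfl fun x _ => by simp [mul_comm]
    have h0 : star (ψ i - ψ j) ⬝ᵥ (ψ i - ψ j) = 0 := by
      simp only [star_sub, sub_dotProduct, dotProduct_sub, hψunit, hb, hb']
      ring
    have := dotProduct_star_self_eq_zero.mp h0
    exact sub_eq_zero.mp this
  intro i j
  by_contra hne
  apply hOND
  set H₀ : Submodule ℂ (Fin n → ℂ) :=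
    Submodule.span ℂ {x | ∃ k, ψ k = ψ i ∧ x = φ k} with hH₀
  have orth : ∀ k, ψ k ≠ ψ i → ∀ y ∈ H₀, star y ⬝ᵥ φ k = 0 := by
    intro k hk y hy
    have lin : star (φ k) ⬝ᵥ y = 0 := by
      induction hy using Submodule.span_induction with
      | mem x hx =>
        obtain ⟨l, hl, rfl⟩ := hx
        by_contra hc
        exact hk ((key k l hc).trans hl)
      | zero => simp
      | add x z _ _ hx hz => rw [dotProduct_add, hx, hz, add_zero]
      | smul c x _ hx => rw [dotProduct_smul, hx, smul_zero]
    have h := congrArg star lin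
    simp only [dotProduct, star_sum, star_mul', star_star, Pi.star_apply, star_zero] at h
    rw [← h, dotProduct]
    exact Finset.sum_congr rfl fun x _ => by simp [mul_comm]
  have hφi_mem : φ i ∈ H₀ := Submodule.subset_span ⟨i, rfl, rfl⟩
  refine ⟨H₀, ?_, ?_, ?_⟩
  · intro h
    rw [h, Submodule.mem_bot] at hφi_mem
    have := hφunit i
    rw [hφi_mem] at this
    simp at this
  · intro h
    have hji : ψ j ≠ ψ i := fun h' => hne h'.symm
    have := orth j hji (φ j) (h ▸ Submodule.mem_top)
    rw [hφunit j] at this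
    exact one_ne_zero this
  · intro k
    by_cases hk : ψ k = ψ i
    · exact Or.inl (Submodule.subset_span ⟨k, hk, rfl⟩)
    · exact Or.inr (orth k hk)


end
end
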